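/- There exist a logic 𝕃 = (L, Ω, ⊨) and a base change operator ∘ for 𝕃 satisfying (G1)–(G6) that is not total preorder representable. -/
import Mathlib


namespace BeliefRev

variable {L Ω : Type*}

/-- The models of a belief base (a finite set of sentences). -/
def Mod (sat : Ω → L → Prop) (K : Finset L) : Set Ω :=
  {ω | ∀ φ ∈ K, sat ω φ}

/-- `min(S, r)`: the elements of `S` that are `r`-below every element of `S`. -/
def minSet (S : Set Ω) (r : Ω → Ω → Prop) : Set Ω :=
  {ω ∈ S | ∀ ω' ∈ S, r ω ω'}

/-- A binary relation is total. -/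
def TotalRel (r : Ω → Ω → Prop) : Prop :=
  ∀ ω₁ ω₂, r ω₁ ω₂ ∨ r ω₂ ω₁

/-- The strict part of a relation: `ω₁ ≺ ω₂` iff `ω₁ ⪯ ω₂` and not `ω₂ ⪯ ω₁`. -/
def StrictRel (r : Ω → Ω → Prop) (ω₁ ω₂ : Ω) : Prop :=
  r ω₁ ω₂ ∧ ¬ r ω₂ ω₁

/-- Postulate (G1). -/
def G1 (sat : Ω → L → Prop) (op : Finset L → Finset L → Finset L) : Prop :=
  ∀ K Γ, Mod sat (op K Γ) ⊆ Mod sat Γ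

/-- Postulate (G2). -/
def G2 [DecidableEq L] (sat : Ω → L → Prop) (op : Finset L → Finset L → Finset L) : Prop :=
  ∀ K Γ, (Mod sat (K ∪ Γ)).Nonempty → Mod sat (op K Γ) = Mod sat (K ∪ Γ)

/-- Postulate (G3). -/
def G3 (sat : Ω → L → Prop) (op : Finset L → Finset L → Finset L) : Prop :=
  ∀ K Γ, (Mod sat Γ).Nonempty → (Mod sat (op K Γ)).Nonempty

/-- Postulate (G4). -/
def G4 (sat : Ω → L → Prop) (op : Finset L → Finset L → Finset L) : Prop :=
  ∀ K₁ K₂ Γ₁ Γ₂, Mod sat K₁ = Mod sat K₂ → Mod sat Γ₁ = Mod sat Γ₂ →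
    Mod sat (op K₁ Γ₁) = Mod sat (op K₂ Γ₂)

/-- Postulate (G5). -/
def G5 [DecidableEq L] (sat : Ω → L → Prop) (op : Finset L → Finset L → Finset L) : Prop :=
  ∀ K Γ₁ Γ₂, Mod sat (op K Γ₁) ∩ Mod sat Γ₂ ⊆ Mod sat (op K (Γ₁ ∪ Γ₂))

/-- Postulate (G6). -/
def G6 [DecidableEq L] (sat : Ω → L → Prop) (op : Finset L → Finset L → Finset L) : Prop :=
  ∀ K Γ₁ Γ₂, (Mod sat (op K Γ₁) ∩ Mod sat Γ₂).Nonempty →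
    Mod sat (op K (Γ₁ ∪ Γ₂)) ⊆ Mod sat (op K Γ₁) ∩ Mod sat Γ₂

/-- The conjunction of postulates (G1)–(G6). -/
def AGM [DecidableEq L] (sat : Ω → L → Prop) (op : Finset L → Finset L → Finset L) : Prop :=
  G1 sat op ∧ G2 sat op ∧ G3 sat op ∧ G4 sat op ∧ G5 sat op ∧ G6 sat op

/-- The canonical relation `⪯ᵒ_K` obtained from a base change operator. -/
def canonicalRel (sat : Ω → L → Prop) (op : Finset L → Finset L → Finset L)
    (K : Finset L) (ω₁ ω₂ : Ω) : Prop :=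
  ∀ Γ : Finset L, ω₁ ∈ Mod sat Γ → ω₂ ∈ Mod sat Γ →
    (ω₁ ∈ Mod sat (op K Γ) ∨ ω₂ ∉ Mod sat (op K Γ))

/-- A relation is min-retractive. -/
def MinRetractive (sat : Ω → L → Prop) (r : Ω → Ω → Prop) : Prop :=
  ∀ (Γ : Finset L) (ω ω' : Ω), ω ∈ Mod sat Γ → ω' ∈ Mod sat Γ →
    r ω' ω → ω ∈ minSet (Mod sat Γ) r → ω' ∈ minSet (Mod sat Γ) r

/-- A relation is min-complete. -/
def MinComplete (sat : Ω → L → Prop) (r : Ω → Ω → Prop) : Prop :=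
  ∀ Γ : Finset L, (Mod sat Γ).Nonempty → (minSet (Mod sat Γ) r).Nonempty

/-- A relation is min-friendly: min-retractive and min-complete. -/
def MinFriendly (sat : Ω → L → Prop) (r : Ω → Ω → Prop) : Prop :=
  MinRetractive sat r ∧ MinComplete sat r

/-- A relation is min-expressible. -/
def MinExpressible (sat : Ω → L → Prop) (r : Ω → Ω → Prop) : Prop :=
  ∀ Γ : Finset L, ∃ B : Finset L, Mod sat B = minSet (Mod sat Γ) r

/-- An assignment maps each belief base to a *total* relation on interpretations. -/
def IsAssignment (assign : Finset L → Ω → Ω → Prop) : Prop :=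
  ∀ K : Finset L, TotalRel (assign K)

/-- Faithfulness of an assignment: conditions (F1), (F2) and (F3). -/
def Faithful (sat : Ω → L → Prop) (assign : Finset L → Ω → Ω → Prop) : Prop :=
  (∀ (K : Finset L) (ω ω' : Ω), ω ∈ Mod sat K → ω' ∈ Mod sat K →
      ¬ StrictRel (assign K) ω ω') ∧
  (∀ (K : Finset L) (ω ω' : Ω), ω ∈ Mod sat K → ω' ∉ Mod sat K →
      StrictRel (assign K) ω ω') ∧
  (∀ K K' : Finset L, Mod sat K = Mod sat K' → assign K = assign K')

/-- Compatibility of a base change operator with an assignment. -/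
def Compatible (sat : Ω → L → Prop) (op : Finset L → Finset L → Finset L)
    (assign : Finset L → Ω → Ω → Prop) : Prop :=
  ∀ K Γ : Finset L, Mod sat (op K Γ) = minSet (Mod sat Γ) (assign K)

/-- Total preorder representability: there is a faithful assignment compatible with `op`
whose relations are all min-complete and transitive (hence total preorders). -/
def TotalPreorderRepresentable (sat : Ω → L → Prop)
    (op : Finset L → Finset L → Finset L) : Prop :=
  ∃ assign : Finset L → Ω → Ω → Prop,
    IsAssignment assign ∧ Faithful sat assign ∧
    (∀ K : Finset L, MinComplete sat (assign K)) ∧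
    (∀ K : Finset L, Transitive (assign K)) ∧
    Compatible sat op assign

/-- A pair of interpretations is detached from `op` in `K`. -/
def Detached (sat : Ω → L → Prop) (op : Finset L → Finset L → Finset L)
    (K : Finset L) (ω ω' : Ω) : Prop :=
  ∀ Γ : Finset L, ω ∉ Mod sat (op K Γ) ∧ ω' ∉ Mod sat (op K Γ)

/-- Three belief bases form a critical loop for the logic. -/
def CriticalLoop [DecidableEq L] (sat : Ω → L → Prop) (Γ₀ Γ₁ Γ₂ : Finset L) : Prop :=
  ∃ K Γ'₀ Γ'₁ Γ'₂ : Finset L,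
    (Mod sat (K ∪ Γ₀) = ∅ ∧ Mod sat (K ∪ Γ₁) = ∅ ∧ Mod sat (K ∪ Γ₂) = ∅) ∧
    ((Mod sat Γ'₀).Nonempty ∧ Mod sat Γ'₀ ⊆ (Mod sat Γ₀ ∩ Mod sat Γ₁) \ Mod sat Γ₂) ∧
    ((Mod sat Γ'₁).Nonempty ∧ Mod sat Γ'₁ ⊆ (Mod sat Γ₁ ∩ Mod sat Γ₂) \ Mod sat Γ₀) ∧
    ((Mod sat Γ'₂).Nonempty ∧ Mod sat Γ'₂ ⊆ (Mod sat Γ₂ ∩ Mod sat Γ₀) \ Mod sat Γ₁) ∧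
    (∀ Γ : Finset L, (Mod sat (Γ'₀ ∪ Γ)).Nonempty → (Mod sat (Γ'₁ ∪ Γ)).Nonempty →
      (Mod sat (Γ'₂ ∪ Γ)).Nonempty →
      ∃ Γ' : Finset L, (Mod sat Γ').Nonempty ∧
        Mod sat Γ' ⊆ Mod sat Γ \ (Mod sat Γ₀ ∪ Mod sat Γ₁ ∪ Mod sat Γ₂))

/-- The logic admits (exhibits) a critical loop. -/
def AdmitsCriticalLoop [DecidableEq L] (sat : Ω → L → Prop) : Prop :=
  ∃ Γ₀ Γ₁ Γ₂ : Finset L, CriticalLoop sat Γ₀ Γ₁ Γ₂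

/-- A logic is disjunctive: any two bases have a base acting as their disjunction. -/
def Disjunctive (sat : Ω → L → Prop) : Prop :=
  ∀ Γ₁ Γ₂ : Finset L, ∃ Δ : Finset L, Mod sat Δ = Mod sat Γ₁ ∪ Mod sat Γ₂
/-! ### Auxiliary construction for the counterexample -/

/-- Closure of a sentence's intended model set: if a set contains `0,1,2` it must
contain `3` in our restricted logic. -/
def cl0 (A : Finset (Fin 4)) : Finset (Fin 4) :=
  if (0 : Fin 4) ∈ A ∧ (1 : Fin 4) ∈ A ∧ (2 : Fin 4) ∈ A then insert 3 A else A

/-- The satisfaction relation of the counterexample logic. -/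
def sat0 (ω : Fin 4) (A : Finset (Fin 4)) : Prop := ω ∈ cl0 A

instance : ∀ ω A, Decidable (sat0 ω A) := fun ω A => by unfold sat0; infer_instance

/-- Finset-level models of a base. -/
def modB (K : Finset (Finset (Fin 4))) : Finset (Fin 4) := K.inf cl0

/-- The (cyclic, non-transitive) preference relation. -/
def rel0 : Fin 4 → Fin 4 → Bool := fun a b =>
  a == 3 || a == b || (a == 0 && b == 1) || (a == 1 && b == 2) || (a == 2 && b == 0)

/-- Finset-level minimization under `rel0`. -/
def gammaF (S : Finset (Fin 4)) : Finset (Fin 4) :=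
  S.filter (fun ω => ∀ ω' ∈ S, rel0 ω ω' = true)

/-- The counterexample base change operator. -/
def op0 (K Γ : Finset (Finset (Fin 4))) : Finset (Finset (Fin 4)) :=
  if (modB (K ∪ Γ)).Nonempty then K ∪ Γ else {gammaF (modB Γ)}

/-- Closedness of a model set. -/
def closed0 (S : Finset (Fin 4)) : Prop :=
  (0 : Fin 4) ∈ S → (1 : Fin 4) ∈ S → (2 : Fin 4) ∈ S → (3 : Fin 4) ∈ S

instance : DecidablePred closed0 := fun S => by unfold closed0; infer_instance

lemma mem_modB (K : Finset (Finset (Fin 4))) (ω : Fin 4) :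
    ω ∈ modB K ↔ ∀ A ∈ K, ω ∈ cl0 A := by
  classical
  unfold modB
  induction K using Finset.induction_on with
  | empty => simp
  | @insert A K hA ih => simp [Finset.inf_insert, ih]

lemma mod_eq (K : Finset (Finset (Fin 4))) : Mod sat0 K = ↑(modB K) := by
  ext ω
  simp only [Mod, Set.mem_setOf_eq, Finset.mem_coe, mem_modB, sat0]

lemma modB_union (K Γ : Finset (Finset (Fin 4))) :
    modB (K ∪ Γ) = modB K ∩ modB Γ := by
  classical
  rw [modB, Finset.inf_union, ← Finset.inf_eq_inter]; rfl

lemma closed_cl0 : ∀ A, closed0 (cl0 A) := by decide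

lemma closed_inter : ∀ S T, closed0 S → closed0 T → closed0 (S ∩ T) := by decide

lemma closed_modB (K : Finset (Finset (Fin 4))) : closed0 (modB K) := by
  classical
  induction K using Finset.induction_on with
  | empty =>
      have : modB (∅ : Finset (Finset (Fin 4))) = ⊤ := rfl
      rw [this]; intro _ _ _; exact Finset.mem_univ _
  | @insert A K hA ih =>
      have : modB (insert A K) = cl0 A ∩ modB K := by
        rw [modB, Finset.inf_insert, ← Finset.inf_eq_inter]; rfl
      rw [this]; exact closed_inter _ _ (closed_cl0 A) ih

lemma gamma_sub : ∀ S, gammaF S ⊆ S := by decide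

lemma gamma_cl : ∀ S, cl0 (gammaF S) = gammaF S := by decide

lemma gamma_ne : ∀ S, closed0 S → S.Nonempty → (gammaF S).Nonempty := by decide

lemma gamma_G5 : ∀ S T : Finset (Fin 4), gammaF S ∩ T ⊆ gammaF (S ∩ T) := by decide

lemma gamma_G6 : ∀ S T : Finset (Fin 4),
    (gammaF S ∩ T).Nonempty → gammaF (S ∩ T) ⊆ gammaF S ∩ T := by decide

lemma modB_op (K Γ : Finset (Finset (Fin 4))) :
    modB (op0 K Γ) =
      if (modB (K ∪ Γ)).Nonempty then modB (K ∪ Γ) else gammaF (modB Γ) := by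
  unfold op0
  split
  · rfl
  · rw [modB, Finset.inf_singleton, gamma_cl]

lemma gamma_minSet (S : Finset (Fin 4)) :
    minSet (↑S : Set (Fin 4)) (fun a b => rel0 a b = true) = ↑(gammaF S) := by
  ext ω
  simp [minSet, gammaF]

/-- Extract strict preference information from a pair-minimization. -/
lemma min_pair {r : Fin 4 → Fin 4 → Prop} {a b : Fin 4}
    (h : minSet ({a, b} : Set (Fin 4)) r = {a}) (hbb : r b b) (hab : a ≠ b) :
    r a b ∧ ¬ r b a := by
  have ha : a ∈ minSet ({a, b} : Set (Fin 4)) r := by rw [h]; rfl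
  obtain ⟨-, hmin⟩ := ha
  have hrab : r a b := hmin b (by simp)
  refine ⟨hrab, fun hba => ?_⟩
  have hb : b ∈ minSet ({a, b} : Set (Fin 4)) r := by
    refine ⟨by simp, ?_⟩
    intro ω' hω'
    rcases hω' with h' | h'
    · rw [h']; exact hba
    · rw [h']; exact hbb
  rw [h] at hb
  exact hab (hb.symm)

/-- there exist a logic and a base change operator satisfying
(G1)–(G6) that is not total preorder representable. -/
theorem exists_non_total_preorder_representable :
    ∃ (L Ω : Type) (inst : DecidableEq L)
      (sat : Ω → L → Prop) (op : Finset L → Finset L → Finset L),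
      @AGM L Ω inst sat op ∧ ¬ TotalPreorderRepresentable sat op := by
  classical
  refine ⟨Finset (Fin 4), Fin 4, inferInstance, sat0, op0, ⟨?_, ?_, ?_, ?_, ?_, ?_⟩, ?_⟩
  · -- G1
    intro K Γ
    rw [mod_eq, mod_eq, Finset.coe_subset, modB_op]
    split
    · rw [modB_union]; exact Finset.inter_subset_right
    · exact gamma_sub _
  · -- G2
    intro K Γ h
    rw [mod_eq] at h
    unfold op0
    rw [if_pos (Finset.coe_nonempty.mp h)]
  · -- G3
    intro K Γ h
    rw [mod_eq] at h ⊢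
    rw [Finset.coe_nonempty] at h ⊢
    rw [modB_op]
    split
    · assumption
    · exact gamma_ne _ (closed_modB Γ) h
  · -- G4
    intro K₁ K₂ Γ₁ Γ₂ hK hΓ
    rw [mod_eq, mod_eq] at hK hΓ
    replace hK := Finset.coe_injective hK
    replace hΓ := Finset.coe_injective hΓ
    rw [mod_eq, mod_eq]
    rw [modB_op, modB_op, modB_union, modB_union, hK, hΓ]
  · -- G5
    intro K Γ₁ Γ₂
    rw [mod_eq, mod_eq, mod_eq, ← Finset.coe_inter, Finset.coe_subset,
      modB_op, modB_op, modB_union, modB_union, modB_union]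
    set A := modB K
    set B := modB Γ₁
    set C := modB Γ₂
    split
    · split
      · intro x hx
        simp only [Finset.mem_inter] at hx ⊢
        exact ⟨hx.1.1, hx.1.2, hx.2⟩
      · rename_i h12
        rw [Finset.not_nonempty_iff_eq_empty] at h12
        intro x hx
        exfalso
        simp only [Finset.mem_inter] at hx
        have : x ∈ A ∩ (B ∩ C) := by
          simp only [Finset.mem_inter]; exact ⟨hx.1.1, hx.1.2, hx.2⟩
        rw [h12] at this
        exact absurd this (Finset.notMem_empty x)
    · split
      · rename_i h1 h12
        exfalso
        obtain ⟨x, hx⟩ := h12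
        simp only [Finset.mem_inter] at hx
        exact h1 ⟨x, Finset.mem_inter.mpr ⟨hx.1, hx.2.1⟩⟩
      · exact gamma_G5 B C
  · -- G6
    intro K Γ₁ Γ₂ h
    rw [mod_eq, mod_eq, ← Finset.coe_inter, Finset.coe_nonempty, modB_op,
      modB_union] at h
    rw [mod_eq, mod_eq, mod_eq, ← Finset.coe_inter, Finset.coe_subset,
      modB_op, modB_op, modB_union, modB_union, modB_union]
    set A := modB K
    set B := modB Γ₁
    set C := modB Γ₂
    by_cases h1 : (A ∩ B).Nonempty
    · rw [if_pos h1] at h ⊢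
      have h12 : (A ∩ (B ∩ C)).Nonempty := by
        obtain ⟨x, hx⟩ := h
        simp only [Finset.mem_inter] at hx
        exact ⟨x, by simp only [Finset.mem_inter]; exact ⟨hx.1.1, hx.1.2, hx.2⟩⟩
      rw [if_pos h12]
      intro x hx
      simp only [Finset.mem_inter] at hx ⊢
      exact ⟨⟨hx.1, hx.2.1⟩, hx.2.2⟩
    · rw [if_neg h1] at h ⊢
      have h12 : ¬ (A ∩ (B ∩ C)).Nonempty := by
        intro ⟨x, hx⟩
        simp only [Finset.mem_inter] at hx
        exact h1 ⟨x, Finset.mem_inter.mpr ⟨hx.1, hx.2.1⟩⟩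
      rw [if_neg h12]
      exact gamma_G6 B C h
  · -- not total preorder representable
    rintro ⟨assign, hTot, -, -, hTrans, hCompat⟩
    set Kstar : Finset (Finset (Fin 4)) := {∅} with hKstar
    set r := assign Kstar with hr
    -- helper: for a pair base, the operator minimizes via gammaF
    have key : ∀ a b : Fin 4,
        minSet (↑(cl0 {a, b}) : Set (Fin 4)) r = ↑(gammaF (cl0 {a, b})) := by
      intro a b
      have hc := hCompat Kstar {({a, b} : Finset (Fin 4))}
      rw [mod_eq, mod_eq] at hc
      have h1 : modB ({({a, b} : Finset (Fin 4))} : Finset (Finset (Fin 4)))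
          = cl0 {a, b} := by rw [modB, Finset.inf_singleton]
      have h2 : modB (op0 Kstar {({a, b} : Finset (Fin 4))})
          = gammaF (cl0 {a, b}) := by
        rw [modB_op, h1, modB_union, h1]
        have : modB Kstar = ∅ := by rw [hKstar]; decide
        rw [this, if_neg]
        simp
      rw [h1, h2] at hc
      exact hc.symm
    have h01 := key 0 1
    have h12 := key 1 2
    have h02 := key 0 2
    have e01 : (↑(cl0 ({0, 1} : Finset (Fin 4))) : Set (Fin 4)) = {0, 1} := by
      have : cl0 ({0, 1} : Finset (Fin 4)) = {0, 1} := by decide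
      rw [this]; simp
    have e12 : (↑(cl0 ({1, 2} : Finset (Fin 4))) : Set (Fin 4)) = {1, 2} := by
      have : cl0 ({1, 2} : Finset (Fin 4)) = {1, 2} := by decide
      rw [this]; simp
    have e02 : (↑(cl0 ({0, 2} : Finset (Fin 4))) : Set (Fin 4)) = {0, 2} := by
      have : cl0 ({0, 2} : Finset (Fin 4)) = {0, 2} := by decide
      rw [this]; simp
    have g01 : (↑(gammaF (cl0 ({0, 1} : Finset (Fin 4)))) : Set (Fin 4)) = {0} := by
      have : gammaF (cl0 ({0, 1} : Finset (Fin 4))) = {0} := by decide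
      rw [this]; simp
    have g12 : (↑(gammaF (cl0 ({1, 2} : Finset (Fin 4)))) : Set (Fin 4)) = {1} := by
      have : gammaF (cl0 ({1, 2} : Finset (Fin 4))) = {1} := by decide
      rw [this]; simp
    have g02 : (↑(gammaF (cl0 ({0, 2} : Finset (Fin 4)))) : Set (Fin 4)) = {2} := by
      have : gammaF (cl0 ({0, 2} : Finset (Fin 4))) = {2} := by decide
      rw [this]; simp
    rw [e01, g01] at h01
    rw [e12, g12] at h12
    rw [e02, g02] at h02
    have refl : ∀ x : Fin 4, r x x := fun x => (hTot Kstar x x).elim id id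
    have p01 := min_pair h01 (refl 1) (by decide)
    have p12 := min_pair h12 (refl 2) (by decide)
    have p02 : r 2 0 ∧ ¬ r 0 2 := by
      have h02' : minSet ({2, 0} : Set (Fin 4)) r = {2} := by
        rw [show ({2, 0} : Set (Fin 4)) = {0, 2} by ext x; simp [or_comm]]
        exact h02
      exact min_pair h02' (refl 0) (by decide)
    exact p02.2 (hTrans Kstar p01.1 p12.1)

end BeliefRev
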